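/- arXiv:2605.22792 — 3 statements merged into one kernel-verified Lean document; each statement's English description precedes it below -/
import Mathlib

section
/- Let $x_0 < x_1 < \cdots < x_{N+1}$ be real numbers, and fix real numbers $K_1 < K_2 < \cdots < K_N$ with $K_i = x_i$ for $i = 1, \dots, N$. Define the $(N+2) \times (N+2)$ matrix $A_0$ whose first row is all ones, whose second row is $(x_0, x_1, \dots, x_{N+1})$, and whose $(i+2)$-th row (for $i = 1, \dots, N$) has entries $(x_j - K_i)_+$ for $j = 0, \dots, N+1$. Then $\det(A_0) = \prod_{j=0}^{N}(x_{j+1} - x_j)$; in particular $A_0$ is invertible. -/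
open Finset in
/-- determinant of the augmented grid matrix, and invertibility. -/
theorem det_augmented_grid_matrix (N : ℕ) (x K : ℕ → ℝ)
    (hx : ∀ i, i + 1 ≤ N + 1 → x i < x (i + 1))
    (hK : ∀ i, 1 ≤ i → i ≤ N → K i = x i)
    (A₀ : Matrix (Fin (N + 2)) (Fin (N + 2)) ℝ)
    (hA : ∀ i j : Fin (N + 2),
      A₀ i j = if (i : ℕ) = 0 then 1
        else if (i : ℕ) = 1 then x (j : ℕ)
        else max (x (j : ℕ) - K ((i : ℕ) - 1)) 0) :
    A₀.det = ∏ j ∈ Finset.range (N + 1), (x (j + 1) - x j) ∧ IsUnit A₀.det := by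
  have hmono : ∀ a b : ℕ, a ≤ b → b ≤ N + 1 → x a ≤ x b := by
    intro a b hab hb
    induction b with
    | zero =>
      have : a = 0 := Nat.le_zero.mp hab
      subst this; exact le_refl _
    | succ n ih =>
      rcases Nat.lt_or_ge a (n + 1) with h | h
      · exact le_trans (ih (by omega) (by omega)) (le_of_lt (hx n hb))
      · have : a = n + 1 := by omega
        subst this; exact le_refl _
  have h10 : (1 : Fin (N + 2)) ≠ 0 := by
    simp [Fin.ext_iff]
  set B := A₀.updateRow 1 (A₀ 1 + (-x 0) • A₀ 0) with hBdef
  have hdet : B.det = A₀.det := Matrix.det_updateRow_add_smul_self A₀ h10 _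
  have hB : ∀ i j : Fin (N + 2), B i j =
      if (i : ℕ) = 0 then 1
      else if (i : ℕ) = 1 then x (j : ℕ) - x 0
      else max (x (j : ℕ) - K ((i : ℕ) - 1)) 0 := by
    intro i j
    by_cases h1 : i = 1
    · subst h1
      rw [hBdef, Matrix.updateRow_self]
      simp [hA, Fin.val_one]
      ring
    · rw [hBdef, Matrix.updateRow_ne h1, hA]
      have hne : (i : ℕ) ≠ 1 := fun h => h1 (Fin.ext (by simp [h, Fin.val_one]))
      simp [hne]
  have htri : B.BlockTriangular id := by
    intro i j hij
    have hji : (j : ℕ) < (i : ℕ) := hij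
    rw [hB]
    rcases Nat.lt_or_ge (i : ℕ) 2 with h2 | h2
    · have hi1 : (i : ℕ) = 1 := by omega
      have hj0 : (j : ℕ) = 0 := by omega
      simp [hi1, hj0]
    · have hi0 : (i : ℕ) ≠ 0 := by omega
      have hi1 : (i : ℕ) ≠ 1 := by omega
      simp only [if_neg hi0, if_neg hi1]
      have hiN : (i : ℕ) < N + 2 := i.isLt
      rw [hK _ (by omega) (by omega)]
      have hle : x (j : ℕ) ≤ x ((i : ℕ) - 1) := hmono _ _ (by omega) (by omega)
      exact max_eq_right (by linarith)
  have hdiag : ∀ i : Fin (N + 2),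
      B i i = if (i : ℕ) = 0 then 1 else x (i : ℕ) - x ((i : ℕ) - 1) := by
    intro i
    rw [hB]
    by_cases h0 : (i : ℕ) = 0
    · simp [h0]
    by_cases h1 : (i : ℕ) = 1
    · simp [h0, h1]
    · simp only [if_neg h0, if_neg h1]
      have hiN : (i : ℕ) < N + 2 := i.isLt
      rw [hK _ (by omega) (by omega)]
      have hle : x ((i : ℕ) - 1) ≤ x (i : ℕ) := hmono _ _ (by omega) (by omega)
      exact max_eq_left (by linarith)
  have hprod : ∏ i : Fin (N + 2), B i i
      = ∏ j ∈ Finset.range (N + 1), (x (j + 1) - x j) := by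
    rw [Finset.prod_congr rfl (fun i _ => hdiag i)]
    rw [Fin.prod_univ_eq_prod_range
      (fun n => if n = 0 then (1 : ℝ) else x n - x (n - 1)) (N + 2)]
    rw [Finset.prod_range_succ']
    simp
  have hdetval : A₀.det = ∏ j ∈ Finset.range (N + 1), (x (j + 1) - x j) := by
    rw [← hdet, Matrix.det_of_upperTriangular htri, hprod]
  have hpos : 0 < ∏ j ∈ Finset.range (N + 1), (x (j + 1) - x j) :=
    Finset.prod_pos (fun j hj => sub_pos.2 (hx j (by
      simp only [Finset.mem_range] at hj; omega)))
  exact ⟨hdetval, by rw [hdetval]; exact isUnit_iff_ne_zero.2 (ne_of_gt hpos)⟩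
end

section
/- Let $S_T$ be lognormally distributed with density $g(y) = \frac{1}{y \tilde\sigma \sqrt{2\pi}} \exp(-(\ln y - \mu)^2/(2\tilde\sigma^2))$ on $(0,\infty)$, where $\tilde\sigma > 0$ and $\mu \in \mathbb{R}$. Then $\int_0^\infty g'(y)^2\,dy = \frac{e^{-3\mu + \frac{9}{4}\tilde\sigma^2}}{8\sqrt{\pi}} \cdot \frac{\tilde\sigma^2 + 2}{\tilde\sigma^3}$. -/
/-!
Substituting `y = exp t` turns the integral into `∫ e^{-3t} φ(t)² (1 + (t - μ)/σ²)² dt`, with `φ`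
the normal density of mean `μ` and variance `σ²`. Completing the square absorbs `e^{-3t}` into a
Gaussian centred at `m = μ - 3σ²/2`, and `1 + (t - μ)/σ² = (t - m)/σ² - 1/2`, so what remains
is the second moment of a Gaussian.
-/

open Real MeasureTheory Set

theorem integral_sq_mul_exp_neg_mul_sq {b : ℝ} (hb : 0 < b) :
    ∫ x : ℝ, x ^ 2 * exp (-b * x ^ 2) = √(π / b) / (2 * b) := by
  have hΓ : Gamma (3 / 2) = √π / 2 := by
    rw [show (3 / 2 : ℝ) = 1 / 2 + 1 by norm_num, Gamma_add_one (by norm_num), Gamma_one_half_eq]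
    ring
  have hpow : b ^ (-(3 / 2) : ℝ) = (√b)⁻¹ / b := by
    rw [show (-(3 / 2) : ℝ) = -(1 / 2) - 1 by norm_num, rpow_sub_one hb.ne', rpow_neg hb.le,
      ← sqrt_eq_rpow]
  have hhalf := integral_rpow_mul_exp_neg_mul_rpow two_pos (by norm_num : (-1 : ℝ) < 2) hb
  norm_num only [rpow_two] at hhalf
  have heven := integral_comp_abs (f := fun x => x ^ 2 * exp (-b * x ^ 2))
  simp only [sq_abs] at heven
  rw [heven, hhalf, hΓ, hpow, sqrt_div' _ hb.le]
  ring

theorem integral_exp_neg_mul_sq_mul_linear_sq {b : ℝ} (hb : 0 < b) (p q : ℝ) :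
    ∫ x : ℝ, exp (-b * x ^ 2) * (p * x + q) ^ 2 = √(π / b) * (p ^ 2 / (2 * b) + q ^ 2) := by
  have h2 : Integrable fun x : ℝ => x ^ 2 * exp (-b * x ^ 2) := by
    simpa [rpow_two] using integrable_rpow_mul_exp_neg_mul_sq hb (s := 2) (by norm_num)
  have h1 := integrable_mul_exp_neg_mul_sq hb
  have h0 := integrable_exp_neg_mul_sq hb
  have hodd : ∫ x : ℝ, x * exp (-b * x ^ 2) = 0 := by
    have := integral_neg_eq_self (fun x : ℝ => x * exp (-b * x ^ 2)) volume
    simp only [neg_mul, neg_sq, integral_neg] at this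
    simp only [neg_mul]
    linarith
  have hexpand : ∀ x : ℝ, exp (-b * x ^ 2) * (p * x + q) ^ 2 =
      p ^ 2 * (x ^ 2 * exp (-b * x ^ 2)) + 2 * p * q * (x * exp (-b * x ^ 2))
        + q ^ 2 * exp (-b * x ^ 2) := fun x => by ring
  simp only [hexpand]
  rw [integral_add ((h2.const_mul _).fun_add (h1.const_mul _)) (h0.const_mul _),
    integral_add (h2.const_mul _) (h1.const_mul _), integral_const_mul, integral_const_mul,
    integral_const_mul, integral_sq_mul_exp_neg_mul_sq hb, hodd, integral_gaussian]
  ring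

theorem integral_Ioi_zero_eq_integral_exp_smul {E : Type*} [NormedAddCommGroup E]
    [NormedSpace ℝ E] (f : ℝ → E) :
    ∫ y in Ioi 0, f y = ∫ x, exp x • f (exp x) := by
  simpa [abs_of_pos (exp_pos _)] using integral_image_eq_integral_abs_deriv_smul
    MeasurableSet.univ (fun x _ ↦ (hasDerivAt_exp x).hasDerivWithinAt) exp_injective.injOn f

noncomputable def lognormalPDF (μ σ y : ℝ) : ℝ :=
  (y * σ * √(2 * π))⁻¹ * exp (-(log y - μ) ^ 2 / (2 * σ ^ 2))

theorem hasDerivAt_lognormalPDF (μ : ℝ) {σ y : ℝ} (hσ : σ ≠ 0) (hy : 0 < y) :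
    HasDerivAt (lognormalPDF μ σ) (-(lognormalPDF μ σ y / y) * (1 + (log y - μ) / σ ^ 2)) y := by
  have hexp : HasDerivAt (fun z => exp (-(log z - μ) ^ 2 / (2 * σ ^ 2)))
      (exp (-(log y - μ) ^ 2 / (2 * σ ^ 2)) * (-(2 * (log y - μ) * y⁻¹) / (2 * σ ^ 2))) y := by
    simpa using ((((hasDerivAt_log hy.ne').sub_const μ).pow 2).neg.div_const (2 * σ ^ 2)).exp
  have hinv := (((hasDerivAt_id' y).mul_const σ).mul_const (√(2 * π))).inv
    (mul_ne_zero (mul_ne_zero hy.ne' hσ) (by positivity))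
  refine (hinv.mul hexp).congr_deriv ?_
  simp only [lognormalPDF, Pi.inv_apply]
  field_simp
  ring

theorem exp_mul_sq_lognormalPDF_deriv_exp (μ : ℝ) {σ : ℝ} (hσ : σ ≠ 0) (t : ℝ) :
    exp t * (-(lognormalPDF μ σ (exp t) / exp t) * (1 + (log (exp t) - μ) / σ ^ 2)) ^ 2 =
      (2 * π * σ ^ 2)⁻¹ * exp (-3 * μ + 9 / 4 * σ ^ 2) *
        (exp (-(σ ^ 2)⁻¹ * (t - (μ - 3 / 2 * σ ^ 2)) ^ 2) *
          ((σ ^ 2)⁻¹ * (t - (μ - 3 / 2 * σ ^ 2)) + -1 / 2) ^ 2) := by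
  have hsquare : exp (-3 * μ + 9 / 4 * σ ^ 2) * exp (-(σ ^ 2)⁻¹ * (t - (μ - 3 / 2 * σ ^ 2)) ^ 2) =
      exp (-t) ^ 3 * exp (-(t - μ) ^ 2 / (2 * σ ^ 2)) ^ 2 := by
    rw [← exp_nat_mul, ← exp_nat_mul, ← exp_add, ← exp_add]
    congr 1
    push_cast
    field_simp
    ring
  have hπ : √(2 * π) ^ 2 = 2 * π := sq_sqrt (by positivity)
  unfold lognormalPDF
  rw [log_exp, mul_assoc (2 * π * σ ^ 2)⁻¹, ← mul_assoc (exp (-3 * μ + 9 / 4 * σ ^ 2)),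
    hsquare, exp_neg]
  field_simp
  rw [hπ]
  ring

open Real in
/-- the squared `L²`-norm of the derivative of the lognormal density. -/
theorem lognormal_density_deriv_L2 (μ σ : ℝ) (hσ : 0 < σ) (g : ℝ → ℝ)
    (hg : ∀ y > (0 : ℝ),
      g y = (y * σ * Real.sqrt (2 * π))⁻¹ *
        Real.exp (-(Real.log y - μ) ^ 2 / (2 * σ ^ 2))) :
    ∫ y in Set.Ioi (0 : ℝ), (deriv g y) ^ 2 =
      Real.exp (-3 * μ + 9 / 4 * σ ^ 2) / (8 * Real.sqrt π) *
        ((σ ^ 2 + 2) / σ ^ 3) := by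
  have hderiv (y : ℝ) (hy : y ∈ Ioi 0) :
      deriv g y = -(lognormalPDF μ σ y / y) * (1 + (log y - μ) / σ ^ 2) :=
    (Filter.eventuallyEq_of_mem (Ioi_mem_nhds hy) hg).deriv_eq.trans
      (hasDerivAt_lognormalPDF μ hσ.ne' hy).deriv
  calc ∫ y in Ioi 0, deriv g y ^ 2
      = ∫ y in Ioi 0, (-(lognormalPDF μ σ y / y) * (1 + (log y - μ) / σ ^ 2)) ^ 2 :=
        setIntegral_congr_fun measurableSet_Ioi fun y hy => by rw [hderiv y hy]
    _ = ∫ t, (2 * π * σ ^ 2)⁻¹ * exp (-3 * μ + 9 / 4 * σ ^ 2) *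
          (exp (-(σ ^ 2)⁻¹ * (t - (μ - 3 / 2 * σ ^ 2)) ^ 2) *
            ((σ ^ 2)⁻¹ * (t - (μ - 3 / 2 * σ ^ 2)) + -1 / 2) ^ 2) := by
        simp only [integral_Ioi_zero_eq_integral_exp_smul, smul_eq_mul,
          exp_mul_sq_lognormalPDF_deriv_exp μ hσ.ne']
    _ = (2 * π * σ ^ 2)⁻¹ * exp (-3 * μ + 9 / 4 * σ ^ 2) *
          ∫ x, exp (-(σ ^ 2)⁻¹ * x ^ 2) * ((σ ^ 2)⁻¹ * x + -1 / 2) ^ 2 := by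
        rw [integral_const_mul, integral_sub_right_eq_self
          (fun x => exp (-(σ ^ 2)⁻¹ * x ^ 2) * ((σ ^ 2)⁻¹ * x + -1 / 2) ^ 2)]
    _ = _ := by
        rw [integral_exp_neg_mul_sq_mul_linear_sq (by positivity), div_inv_eq_mul,
          sqrt_mul pi_pos.le, sqrt_sq hσ.le]
        have hπ : √π ^ 2 = π := sq_sqrt pi_pos.le
        field_simp
        rw [hπ]
        ring
end

section
/- Let $0 = K_0 < K_1 < \cdots < K_N < K_{N+1}$ and $C_0 > C_1 > \cdots > C_N > C_{N+1} = 0$ be reals, let $r, T \in \mathbb{R}$, and define $Q_i := e^{rT}(C_i - C_{i+1})/(K_{i+1} - K_i)$ for $i = 0, \dots, N$. Define the discrete measure $\nu_0$ on $\{K_0, \dots, K_{N+1}\}$ with weights $1 - Q_0$ at $K_0$, $Q_{j-1} - Q_j$ at $K_j$ for $j = 1, \dots, N$, and $Q_N$ at $K_{N+1}$. Then for every $i \in \{0, \dots, N\}$: $e^{-rT} \sum_{j=0}^{N+1} \nu_0(\{K_j\}) (K_j - K_i)_+ = C_i$. -/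
open Finset in
/-- the discrete Breeden–Litzenberger measure replicates all call prices. -/
theorem breeden_litzenberger_replication (N : ℕ) (K C : ℕ → ℝ) (r T : ℝ)
    (hK0 : K 0 = 0)
    (hK : ∀ i, i + 1 ≤ N + 1 → K i < K (i + 1))
    (hC : ∀ i, i + 1 ≤ N + 1 → C (i + 1) < C i)
    (hCend : C (N + 1) = 0)
    (Q : ℕ → ℝ)
    (hQ : ∀ i ≤ N, Q i = Real.exp (r * T) * (C i - C (i + 1)) / (K (i + 1) - K i))
    (w : ℕ → ℝ)
    (hw0 : w 0 = 1 - Q 0)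
    (hwj : ∀ j, 1 ≤ j → j ≤ N → w j = Q (j - 1) - Q j)
    (hwN : w (N + 1) = Q N) :
    ∀ i ≤ N,
      Real.exp (-(r * T)) * ∑ j ∈ Finset.range (N + 2), w j * max (K j - K i) 0 = C i := by
  have hKmono : ∀ m, m ≤ N + 1 → ∀ j ≤ m, K j ≤ K m := by
    intro m
    induction m with
    | zero => intro _ j hj; have : j = 0 := by omega
              rw [this]
    | succ n ih =>
      intro hm j hj
      rcases Nat.lt_or_ge j (n + 1) with h | h
      · exact le_trans (ih (by omega) j (by omega)) (le_of_lt (hK n (by omega)))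
      · have : j = n + 1 := by omega
        rw [this]
  have hKstrict : ∀ j m, j < m → m ≤ N + 1 → K j < K m := by
    intro j m hjm hm
    obtain ⟨n, rfl⟩ : ∃ n, m = n + 1 := ⟨m - 1, by omega⟩
    exact lt_of_le_of_lt (hKmono n (by omega) j (by omega)) (hK n (by omega))
  have hQK : ∀ m, m ≤ N → Q m * (K (m + 1) - K m) = Real.exp (r * T) * (C m - C (m + 1)) := by
    intro m hm
    have hpos : K (m + 1) - K m ≠ 0 := ne_of_gt (sub_pos.mpr (hK m (by omega)))
    rw [hQ m hm]
    field_simp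
  have hT : ∀ d i, i + d = N → ∑ j ∈ Finset.Ico (i + 1) (N + 2), w j = Q i := by
    intro d
    induction d with
    | zero =>
      intro i hi
      have hiN : i = N := by omega
      rw [hiN]
      rw [show N + 2 = (N + 1) + 1 from rfl, Finset.sum_Ico_succ_top (by omega),
        Finset.Ico_self, Finset.sum_empty, zero_add, hwN]
    | succ d ih =>
      intro i hi
      rw [Finset.sum_eq_sum_Ico_succ_bot (by omega), ih (i + 1) (by omega),
        hwj (i + 1) (by omega) (by omega)]
      simp
  have hS : ∀ d i, i + d = N →
      ∑ j ∈ Finset.Ico (i + 1) (N + 2), w j * (K j - K i) = Real.exp (r * T) * C i := by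
    intro d
    induction d with
    | zero =>
      intro i hi
      have hiN : i = N := by omega
      rw [hiN]
      rw [show N + 2 = (N + 1) + 1 from rfl, Finset.sum_Ico_succ_top (by omega),
        Finset.Ico_self, Finset.sum_empty, zero_add, hwN, hQK N le_rfl, hCend]
      ring
    | succ d ih =>
      intro i hi
      have key : ∀ j ∈ Finset.Ico (i + 1) (N + 2),
          w j * (K j - K i) = w j * (K j - K (i + 1)) + w j * (K (i + 1) - K i) := by
        intro j _; ring
      rw [Finset.sum_congr rfl key, Finset.sum_add_distrib, ← Finset.sum_mul,
        hT (d + 1) i hi]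
      have h1 : ∑ j ∈ Finset.Ico (i + 1) (N + 2), w j * (K j - K (i + 1))
          = Real.exp (r * T) * C (i + 1) := by
        rw [Finset.sum_eq_sum_Ico_succ_bot (by omega), sub_self, mul_zero, zero_add]
        exact ih (i + 1) (by omega)
      rw [h1, hQK i (by omega)]
      ring
  intro i hi
  have hsplit : ∑ j ∈ Finset.range (N + 2), w j * max (K j - K i) 0
      = ∑ j ∈ Finset.Ico (i + 1) (N + 2), w j * (K j - K i) := by
    rw [Finset.range_eq_Ico,
      ← Finset.sum_Ico_consecutive _ (Nat.zero_le (i + 1)) (by omega)]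
    have h1 : ∑ j ∈ Finset.Ico 0 (i + 1), w j * max (K j - K i) 0 = 0 := by
      apply Finset.sum_eq_zero
      intro j hj
      simp only [Finset.mem_Ico] at hj
      rw [max_eq_right (sub_nonpos.mpr (hKmono i (by omega) j (by omega))), mul_zero]
    rw [h1, zero_add]
    apply Finset.sum_congr rfl
    intro j hj
    simp only [Finset.mem_Ico] at hj
    rw [max_eq_left (sub_nonneg.mpr (le_of_lt (hKstrict i j (by omega) (by omega))))]
  rw [hsplit, hS (N - i) i (by omega), ← mul_assoc, ← Real.exp_add, neg_add_cancel,
    Real.exp_zero, one_mul]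
end
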